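/- arXiv:1901.01401 — 3 statements merged into one kernel-verified Lean document; each statement's English description precedes it below -/
import Mathlib

section
/- PGL(2,ℤ) is not generated by two elements of finite order. -/
/-!
A torsion element of `GL(2, ℤ)` has trace in `[-2, 2]`, since otherwise the traces of its powers,
which satisfy `t (k + 2) = t * t (k + 1) - d * t k`, would grow strictly in absolute value;
Cayley–Hamilton then shows that its square or its cube is `±1`, so torsion in `PGL(2, ℤ)` has
order 1, 2 or 3.

If one of two generators has order dividing 3, it dies in the abelian quotient
`PGL(2, ℤ) → ℤˣ × ℤˣ` given by the determinant and by the sign of the reduction mod 2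
(`GL(2, 𝔽₂) ≅ S₃`). This quotient is a Klein four-group, hence not cyclic, yet it would be generated
by the image of the other generator. If both generators are involutions `x, y`, the group is
dihedral: every element is `(xy)^k` or `x (xy)^k`, so all squares lie in the cyclic group
`⟨xy⟩` and commute. But the squares of the two elementary unipotent matrices do not commute,
even up to sign.
-/

/-- `PGL(2, ℤ)`, the quotient of `GL(2, ℤ)` by its center `{±I}`. -/
abbrev PGL2Z :=
  Matrix.GeneralLinearGroup (Fin 2) ℤ ⧸ Subgroup.center (Matrix.GeneralLinearGroup (Fin 2) ℤ)

section TwoGenerators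

open Subgroup

variable {G : Type*} [Group G] {x y : G}

theorem zpow_mul_mul_left_eq_mul_zpow_neg (hx : x ^ 2 = 1) (hy : y ^ 2 = 1) (k : ℤ) :
    (x * y) ^ k * x = x * (x * y) ^ (-k) := by
  have hxx : x * x = 1 := by rw [← sq, hx]
  have hconj : x * (x * y) * x⁻¹ = (x * y)⁻¹ := by
    rw [mul_inv_rev, inv_eq_of_mul_eq_one_right (by rw [← sq, hy] : y * y = 1), ← mul_assoc, hxx,
      one_mul]
  rw [← inv_zpow', ← hconj, conj_zpow, inv_eq_of_mul_eq_one_right hxx, ← mul_assoc, ← mul_assoc,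
    hxx, one_mul]

theorem exists_eq_zpow_or_eq_mul_zpow_of_closure_pair_eq_top (hx : x ^ 2 = 1) (hy : y ^ 2 = 1)
    (h : closure {x, y} = ⊤) (g : G) : ∃ k : ℤ, g = (x * y) ^ k ∨ g = x * (x * y) ^ k := by
  have hxx : x * x = 1 := by rw [← sq, hx]
  have hcx := zpow_mul_mul_left_eq_mul_zpow_neg hx hy
  have hmem : g ∈ closure {x, y} := h ▸ mem_top g
  induction hmem using closure_induction with
  | mem z hz =>
    rcases hz with rfl | rfl
    · exact ⟨0, Or.inr (by simp)⟩
    · exact ⟨1, Or.inr (by rw [zpow_one, ← mul_assoc, hxx, one_mul])⟩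
  | one => exact ⟨0, Or.inl (zpow_zero _).symm⟩
  | mul a b _ _ ha hb =>
    obtain ⟨k, rfl | rfl⟩ := ha <;> obtain ⟨l, rfl | rfl⟩ := hb
    · exact ⟨k + l, Or.inl (zpow_add _ _ _).symm⟩
    · exact ⟨-k + l, Or.inr (by rw [← mul_assoc, hcx, mul_assoc, ← zpow_add])⟩
    · exact ⟨k + l, Or.inr (by rw [mul_assoc, ← zpow_add])⟩
    · refine ⟨-k + l, Or.inl ?_⟩
      rw [mul_assoc, ← mul_assoc _ x, hcx, ← mul_assoc, ← mul_assoc, hxx, one_mul, ← zpow_add]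
  | inv a _ ha =>
    obtain ⟨k, rfl | rfl⟩ := ha
    · exact ⟨-k, Or.inl (zpow_neg _ _).symm⟩
    · exact ⟨k, Or.inr (by rw [mul_inv_rev, inv_eq_of_mul_eq_one_right hxx, ← zpow_neg, hcx,
        neg_neg])⟩

theorem commute_sq_sq_of_closure_pair_eq_top (hx : x ^ 2 = 1) (hy : y ^ 2 = 1)
    (h : closure {x, y} = ⊤) (g g' : G) : Commute (g ^ 2) (g' ^ 2) := by
  have hsq : ∀ g : G, ∃ k : ℤ, g ^ 2 = (x * y) ^ k := by
    intro g
    obtain ⟨k, rfl | rfl⟩ := exists_eq_zpow_or_eq_mul_zpow_of_closure_pair_eq_top hx hy h g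
    · exact ⟨k + k, by rw [sq, zpow_add]⟩
    · refine ⟨0, ?_⟩
      rw [sq, mul_assoc, ← mul_assoc _ x, zpow_mul_mul_left_eq_mul_zpow_neg hx hy, ← mul_assoc,
        ← mul_assoc, ← sq, hx, one_mul, ← zpow_add, neg_add_cancel]
  obtain ⟨k, hk⟩ := hsq g
  obtain ⟨l, hl⟩ := hsq g'
  rw [hk, hl]
  exact Commute.zpow_zpow_self _ _ _

theorem isCyclic_of_surjective_of_closure_pair_eq_top {H : Type*} [Group H] {f : G →* H}
    (hf : Function.Surjective f) (h : closure {x, y} = ⊤) (hx : f x = 1) : IsCyclic H := by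
  refine isCyclic_iff_exists_zpowers_eq_top.mpr ⟨f y, ?_⟩
  rw [← f.range_eq_top.mpr hf, f.range_eq_map, ← h, MonoidHom.map_closure, Set.image_pair, hx,
    closure_insert_one, zpowers_eq_closure]

end TwoGenerators

theorem one_add_pow_of_mul_self_eq_zero {R : Type*} [Semiring R] {N : R} (hN : N * N = 0)
    (n : ℕ) : (1 + N) ^ n = 1 + n • N := by
  induction n with
  | zero => simp
  | succ n ih =>
    rw [pow_succ, ih, succ_nsmul]
    simp only [mul_add, add_mul, one_mul, mul_one, smul_mul_assoc, hN, smul_zero, add_zero]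
    abel

theorem strictMono_abs_of_recurrence {T : ℕ → ℤ} {t d : ℤ} (ht : 2 ≤ |t|) (hd : |d| = 1)
    (h01 : |T 0| < |T 1|) (hrec : ∀ k, T (k + 2) = t * T (k + 1) - d * T k) :
    StrictMono fun k ↦ |T k| := by
  refine strictMono_nat_of_lt_succ fun k ↦ ?_
  induction k with
  | zero => exact h01
  | succ k ih =>
    show |T (k + 1)| < |T (k + 2)|
    have : |t| * |T (k + 1)| - |T k| ≤ |T (k + 2)| := by
      calc |t| * |T (k + 1)| - |T k| = |t * T (k + 1)| - |d * T k| := by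
            rw [abs_mul, abs_mul, hd, one_mul]
        _ ≤ |T (k + 2)| := by rw [hrec]; exact abs_sub_abs_le_abs_sub _ _
    nlinarith [abs_nonneg (T k)]

namespace Matrix

theorem sq_eq_trace_smul_sub_det_smul_one {R : Type*} [CommRing R]
    (A : Matrix (Fin 2) (Fin 2) R) :
    A ^ 2 = A.trace • A - A.det • (1 : Matrix (Fin 2) (Fin 2) R) := by
  ext i j
  fin_cases i <;> fin_cases j <;>
    simp [sq, Matrix.mul_apply, Fin.sum_univ_two, trace_fin_two, det_fin_two] <;> ring

theorem trace_pow_add_two {R : Type*} [CommRing R] (A : Matrix (Fin 2) (Fin 2) R) (k : ℕ) :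
    (A ^ (k + 2)).trace = A.trace * (A ^ (k + 1)).trace - A.det * (A ^ k).trace := by
  rw [pow_add, sq_eq_trace_smul_sub_det_smul_one, mul_sub, mul_smul_comm, mul_smul_comm, mul_one,
    ← pow_succ, trace_sub, trace_smul, trace_smul, smul_eq_mul, smul_eq_mul]

theorem det_eq_one_or_neg_one_of_pow_eq_one {m : Type*} [Fintype m] [DecidableEq m]
    {A : Matrix m m ℤ} {n : ℕ} (hn : n ≠ 0) (hA : A ^ n = 1) : A.det = 1 ∨ A.det = -1 :=
  Int.isUnit_iff.mp (IsUnit.of_pow_eq_one (by rw [← det_pow, hA, det_one]) hn)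

variable {A : Matrix (Fin 2) (Fin 2) ℤ} {n : ℕ}

theorem abs_trace_le_two_of_pow_eq_one (hn : n ≠ 0) (hA : A ^ n = 1) : |A.trace| ≤ 2 := by
  by_contra! ht
  have hd : |A.det| = 1 := by
    rcases det_eq_one_or_neg_one_of_pow_eq_one hn hA with hd | hd <;> simp [hd]
  have hmono := strictMono_abs_of_recurrence (T := fun k ↦ (A ^ k).trace) (by omega) hd
    (by simpa using ht) (trace_pow_add_two A)
  simpa [hA] using hmono (Nat.pos_of_ne_zero hn)

theorem trace_eq_zero_of_pow_eq_one_of_det_eq_neg_one (hn : n ≠ 0) (hA : A ^ n = 1)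
    (hd : A.det = -1) : A.trace = 0 := by
  have htr : (A ^ 2).trace = A.trace ^ 2 + 2 := by
    simpa [hd, sq] using trace_pow_add_two A 0
  have hle := abs_trace_le_two_of_pow_eq_one (A := A ^ 2) hn
    (by rw [← pow_mul, mul_comm, pow_mul, hA, one_pow])
  rw [htr, abs_of_nonneg (by positivity)] at hle
  nlinarith

theorem eq_one_of_pow_eq_one_of_trace_eq_two (hn : n ≠ 0) (hA : A ^ n = 1) (hd : A.det = 1)
    (ht : A.trace = 2) : A = 1 := by
  have hN : (A - 1) * (A - 1) = 0 := by
    have hCH := sq_eq_trace_smul_sub_det_smul_one A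
    rw [ht, hd, one_smul, two_smul] at hCH
    calc (A - 1) * (A - 1) = A ^ 2 - (A + A) + 1 := by noncomm_ring
      _ = 0 := by rw [hCH]; abel
  have hpow := one_add_pow_of_mul_self_eq_zero hN n
  rw [add_sub_cancel, hA, left_eq_add] at hpow
  ext i j
  simpa [hn, sub_eq_zero] using congr_fun₂ hpow i j

theorem sq_or_pow_three_eq_one_or_neg_one_of_pow_eq_one (hn : n ≠ 0) (hA : A ^ n = 1) :
    (A ^ 2 = 1 ∨ A ^ 2 = -1) ∨ (A ^ 3 = 1 ∨ A ^ 3 = -1) := by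
  have hCH := sq_eq_trace_smul_sub_det_smul_one A
  have hcube : A ^ 3 = A * A ^ 2 := pow_succ' A 2
  rcases det_eq_one_or_neg_one_of_pow_eq_one hn hA with hd | hd
  · have ht := abs_le.mp (abs_trace_le_two_of_pow_eq_one hn hA)
    obtain h | h | h | h | h : A.trace = -2 ∨ A.trace = -1 ∨ A.trace = 0 ∨ A.trace = 1 ∨
        A.trace = 2 := by omega
    · have hneg : -A = 1 := eq_one_of_pow_eq_one_of_trace_eq_two (n := 2 * n) (by omega)
        (by rw [pow_mul, neg_sq, ← pow_mul, mul_comm, pow_mul, hA, one_pow])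
        (by rw [det_neg]; simp [hd]) (by simp [h])
      left; left
      rw [← neg_sq, hneg, one_pow]
    · right; left
      rw [h, hd, neg_one_smul, one_smul] at hCH
      rw [hcube, hCH, mul_sub, mul_neg, ← sq, hCH, mul_one]; abel
    · left; right
      rw [hCH, h, hd]; simp
    · right; right
      rw [h, hd, one_smul, one_smul] at hCH
      rw [hcube, hCH, mul_sub, ← sq, hCH]; simp
    · left; left
      rw [eq_one_of_pow_eq_one_of_trace_eq_two hn hA hd h, one_pow]
  · left; left
    rw [hCH, trace_eq_zero_of_pow_eq_one_of_det_eq_neg_one hn hA hd, hd]; simp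

end Matrix

namespace Matrix.GeneralLinearGroup

theorem mem_center_iff_eq_one_or_eq_neg_one {n : Type*} [Fintype n] [DecidableEq n]
    {g : GL n ℤ} : g ∈ Subgroup.center (GL n ℤ) ↔ g = 1 ∨ g = -1 := by
  rw [center_eq_range_scalar]
  constructor
  · rintro ⟨u, rfl⟩
    rcases Int.units_eq_one_or u with rfl | rfl
    · simp
    · right; ext : 1; simp
  · rintro (rfl | rfl)
    · exact ⟨1, map_one _⟩
    · exact ⟨-1, by ext : 1; simp⟩

end Matrix.GeneralLinearGroup

open Matrix.GeneralLinearGroup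

theorem PGL2Z.sq_eq_one_or_pow_three_eq_one {x : PGL2Z} (hx : IsOfFinOrder x) :
    x ^ 2 = 1 ∨ x ^ 3 = 1 := by
  obtain ⟨g, rfl⟩ := QuotientGroup.mk_surjective x
  obtain ⟨n, hn, hgn⟩ := isOfFinOrder_iff_pow_eq_one.mp hx
  rw [← QuotientGroup.mk_pow, QuotientGroup.eq_one_iff, mem_center_iff_eq_one_or_eq_neg_one] at hgn
  have h2n : (g : Matrix (Fin 2) (Fin 2) ℤ) ^ (2 * n) = 1 := by
    rw [← Units.val_pow_eq_pow_val, mul_comm, pow_mul]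
    rcases hgn with h | h <;> simp [h]
  simp only [← QuotientGroup.mk_pow, QuotientGroup.eq_one_iff, mem_center_iff_eq_one_or_eq_neg_one,
    Units.ext_iff, Units.val_pow_eq_pow_val, Units.val_neg, Units.val_one]
  exact Matrix.sq_or_pow_three_eq_one_or_neg_one_of_pow_eq_one (by omega) h2n

theorem PGL2Z.exists_not_commute_sq : ∃ g h : PGL2Z, ¬ Commute (g ^ 2) (h ^ 2) := by
  refine ⟨QuotientGroup.mk ⟨!![1, 1; 0, 1], !![1, -1; 0, 1], by decide, by decide⟩,
    QuotientGroup.mk ⟨!![1, 0; 1, 1], !![1, 0; -1, 1], by decide, by decide⟩, fun h ↦ ?_⟩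
  rcases mem_center_iff_eq_one_or_eq_neg_one.mp (QuotientGroup.eq.mp h.eq) with h' | h' <;>
    revert h' <;> decide

/-- Under `GL(2, 𝔽₂) ≅ S₃` this is the sign character: the even permutations are the `g` with
`g ^ 3 = 1`. -/
def signGL2ZMod2 : GL (Fin 2) (ZMod 2) →* ℤˣ :=
  MonoidHom.mk' (fun g ↦ if g ^ 3 = 1 then 1 else -1) (by decide)

instance : IsKleinFour (ℤˣ × ℤˣ) where
  card_four := by simp
  exponent_two := by
    have hsq : ∀ g : ℤˣ × ℤˣ, g ^ 2 = 1 := by decide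
    have : Nontrivial (ℤˣ × ℤˣ) := nontrivial_of_ne 1 (-1) (by decide)
    exact (Monoid.exponent_eq_prime_iff Nat.prime_two).mpr fun g hg ↦ orderOf_eq_prime (hsq g) hg

def PGL2Z.detProdSign : PGL2Z →* ℤˣ × ℤˣ :=
  QuotientGroup.lift _ (det.prod (signGL2ZMod2.comp (map (Int.castRingHom (ZMod 2))))) fun g hg ↦ by
    rcases mem_center_iff_eq_one_or_eq_neg_one.mp hg with rfl | rfl <;> decide

theorem PGL2Z.detProdSign_surjective : Function.Surjective PGL2Z.detProdSign := by
  let d : PGL2Z := QuotientGroup.mk ⟨!![-1, 0; 0, 1], !![-1, 0; 0, 1], by decide, by decide⟩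
  let s : PGL2Z := QuotientGroup.mk ⟨!![0, -1; 1, 0], !![0, 1; -1, 0], by decide, by decide⟩
  have hd : PGL2Z.detProdSign d = (-1, 1) := by decide
  have hs : PGL2Z.detProdSign s = (1, -1) := by decide
  rintro ⟨a, b⟩
  rcases Int.units_eq_one_or a with rfl | rfl <;> rcases Int.units_eq_one_or b with rfl | rfl
  · exact ⟨1, map_one _⟩
  · exact ⟨s, hs⟩
  · exact ⟨d, hd⟩
  · exact ⟨d * s, by rw [map_mul, hd, hs]; rfl⟩

theorem PGL2Z.closure_pair_ne_top_of_pow_three_eq_one {x : PGL2Z} (hx : x ^ 3 = 1) (y : PGL2Z) :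
    Subgroup.closure {x, y} ≠ ⊤ := by
  intro h
  have hx' : PGL2Z.detProdSign x = 1 := by
    have := congrArg PGL2Z.detProdSign hx
    rwa [map_pow, map_one, pow_succ, sq, IsKleinFour.mul_self, one_mul] at this
  exact IsKleinFour.not_isCyclic
    (isCyclic_of_surjective_of_closure_pair_eq_top PGL2Z.detProdSign_surjective h hx')

theorem PGL2Z_not_generated_by_two_torsion_elements :
    ¬ ∃ x y : PGL2Z, IsOfFinOrder x ∧ IsOfFinOrder y ∧
      Subgroup.closure ({x, y} : Set PGL2Z) = ⊤ := by
  rintro ⟨x, y, hx, hy, hgen⟩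
  rcases PGL2Z.sq_eq_one_or_pow_three_eq_one hx with hx2 | hx3
  · rcases PGL2Z.sq_eq_one_or_pow_three_eq_one hy with hy2 | hy3
    · obtain ⟨g, h, hgh⟩ := PGL2Z.exists_not_commute_sq
      exact hgh (commute_sq_sq_of_closure_pair_eq_top hx2 hy2 hgen g h)
    · exact PGL2Z.closure_pair_ne_top_of_pow_three_eq_one hy3 x (by rwa [Set.pair_comm])
  · exact PGL2Z.closure_pair_ne_top_of_pow_three_eq_one hx3 y hgen
end

section
/- GL(2,ℤ) cannot be generated by two elements of finite order. -/
/-!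
A finite-order matrix of determinant 1 and trace at least 2 is the identity: for trace 2 it is
unipotent, and for larger trace the traces of its powers grow strictly. Since
tr(A²) = tr(A)² − 2 det A, every finite-order A ∈ GL(2, ℤ) therefore has A² = ±1 or A³ = ±1.

If A³ = ±1, then A is killed by the character (det, sign mod 2) of GL(2, ℤ) onto the non-cyclic
group ℤˣ × ℤˣ, so ⟨A, B⟩ maps into the cyclic subgroup generated by the image of B.
If A² and B² are both ±1, hence central, then AB, BA, A², B² generate an abelian normal
subgroup with cyclic quotient of exponent 2, so all squares in ⟨A, B⟩ commute; but the squares of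
the two elementary shears do not.
-/

namespace Subgroup

variable {G : Type*} [Group G]

theorem closure_pair_ne_top_of_map_eq_one {H : Type*} [Group H] {f : G →* H}
    (hf : Function.Surjective f) (hH : ¬ IsCyclic H) {a : G} (ha : f a = 1) (b : G) :
    closure {a, b} ≠ ⊤ := by
  intro hab
  refine hH ⟨f b, fun y => ?_⟩
  obtain ⟨x, rfl⟩ := hf y
  have hx : f x ∈ (closure {a, b}).map f := mem_map_of_mem f (by rw [hab]; exact mem_top x)
  rw [MonoidHom.map_closure, Set.image_pair, ha] at hx
  have : f x ∈ zpowers (f b) := by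
    rw [zpowers_eq_closure]
    exact closure_le _ |>.2 (Set.insert_subset (one_mem _) subset_closure) hx
  exact mem_zpowers_iff.1 this

theorem sq_mem_of_closure_pair_eq_top {N : Subgroup G} [N.Normal] {a b : G}
    (hab : closure {a, b} = ⊤) (hab_mem : a * b ∈ N) (ha_mem : a ^ 2 ∈ N) (g : G) : g ^ 2 ∈ N := by
  set π := QuotientGroup.mk' N
  have hπab : π (a * b) = 1 := (QuotientGroup.eq_one_iff _).2 hab_mem
  have hπa : π a ^ 2 = 1 := by rw [← map_pow]; exact (QuotientGroup.eq_one_iff _).2 ha_mem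
  have hπb : π b = π a := by rw [← mul_left_cancel_iff (a := π a), ← map_mul, hπab, ← sq, hπa]
  obtain ⟨k, hk⟩ : π g ∈ zpowers (π a) := by
    have hg : π g ∈ (closure {a, b}).map π := mem_map_of_mem π (hab ▸ mem_top g)
    rwa [MonoidHom.map_closure, Set.image_pair, hπb, Set.pair_eq_singleton,
      ← zpowers_eq_closure] at hg
  rw [← QuotientGroup.eq_one_iff]
  change π (g ^ 2) = 1
  rw [map_pow, ← hk, ← zpow_natCast, ← zpow_mul, mul_comm, zpow_mul, zpow_natCast, hπa, one_zpow]

theorem commute_sq_of_closure_pair_eq_top {a b : G} (ha : a ^ 2 ∈ center G)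
    (hb : b ^ 2 ∈ center G) (hab : closure {a, b} = ⊤) (x y : G) : Commute (x ^ 2) (y ^ 2) := by
  have ha' := mem_center_iff.1 ha
  have hb' := mem_center_iff.1 hb
  set s : Set G := {a * b, b * a, a ^ 2, b ^ 2}
  have hs_comm : ∀ u ∈ s, ∀ v ∈ s, u * v = v * u := by
    have hab_ba : a * b * (b * a) = b * a * (a * b) := calc
      a * b * (b * a) = a * (a * b ^ 2) := by rw [hb' a]; simp only [sq, mul_assoc]
      _ = b * (b * a ^ 2) := by rw [← mul_assoc, ← sq, hb' (a ^ 2), sq, mul_assoc]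
      _ = b * a * (a * b) := by rw [mul_assoc b a, ← mul_assoc a a b, ← sq, ← ha' b]
    simp only [s, Set.mem_insert_iff, Set.mem_singleton_iff]
    rintro u (rfl | rfl | rfl | rfl) v (rfl | rfl | rfl | rfl) <;>
      first
      | rfl
      | exact hab_ba
      | exact hab_ba.symm
      | exact ha' _
      | exact (ha' _).symm
      | exact hb' _
      | exact (hb' _).symm
  have hconj_center : ∀ g z, z ∈ center G → g * z * g⁻¹ = z := fun g z hz => by
    rw [mem_center_iff.1 hz g, mul_inv_cancel_right]
  have : (closure s).Normal := by
    have h₁ : a * (a * b) * a⁻¹ = b * a := by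
      rw [mul_inv_eq_iff_eq_mul, ← mul_assoc, ← sq, ← ha' b, mul_assoc, sq]
    have h₂ : b * (b * a) * b⁻¹ = a * b := by
      rw [mul_inv_eq_iff_eq_mul, ← mul_assoc, ← sq, ← hb' a, mul_assoc, sq]
    rw [← normalizer_eq_top_iff, eq_top_iff, ← hab, closure_le, Set.pair_subset_iff]
    constructor <;> refine normalizer_le_normalizer_closure s (mem_normalizer_fintype ?_) <;>
      rintro u (rfl | rfl | rfl | rfl) <;>
      simp [s, h₁, h₂, mul_assoc, hconj_center _ _ ha, hconj_center _ _ hb]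
  have hsq (g : G) : g ^ 2 ∈ closure s := by
    refine sq_mem_of_closure_pair_eq_top hab ?_ ?_ g <;> exact subset_closure (by simp [s])
  have hcl := closure_le_centralizer_centralizer s
  exact Set.centralizer_centralizer_comm_of_comm hs_comm _ (hcl (hsq x)) _ (hcl (hsq y))

theorem neg_one_mem_center [HasDistribNeg G] : (-1 : G) ∈ center G :=
  mem_center_iff.2 fun g => by rw [mul_neg_one, neg_one_mul]

end Subgroup

theorem Int.not_isCyclic_units_prod : ¬ IsCyclic (ℤˣ × ℤˣ) := by
  intro h
  have hexp : Monoid.exponent (ℤˣ × ℤˣ) ∣ 2 :=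
    Monoid.exponent_dvd_of_forall_pow_eq_one fun g => Prod.ext (Int.units_sq _) (Int.units_sq _)
  rw [IsCyclic.exponent_eq_card, Nat.card_prod, Nat.card_eq_fintype_card,
    Fintype.card_units_int] at hexp
  norm_num at hexp

theorem eq_one_of_sq_sub_one_eq_zero_of_pow_eq_one {R : Type*} [Ring R] [IsAddTorsionFree R]
    {x : R} (hx : (x - 1) ^ 2 = 0) {n : ℕ} (hn : n ≠ 0) (hxn : x ^ n = 1) : x = 1 := by
  obtain ⟨y, rfl⟩ : ∃ y, x = 1 + y := ⟨x - 1, by abel⟩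
  rw [add_sub_cancel_left, sq] at hx
  have hpow : ∀ m : ℕ, (1 + y) ^ m = 1 + m • y := by
    intro m
    induction m with
    | zero => simp
    | succ m ih =>
      rw [pow_succ, ih, mul_add, mul_one, add_mul, one_mul, smul_mul_assoc, hx, smul_zero,
        add_zero, succ_nsmul, add_assoc]
  rwa [hpow n, add_eq_left, nsmul_eq_zero_iff_right hn, ← add_eq_left (a := 1)] at hxn

namespace Matrix

instance {m n α : Type*} [AddMonoid α] [IsAddTorsionFree α] : IsAddTorsionFree (Matrix m n α) :=
  inferInstanceAs (IsAddTorsionFree (m → n → α))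

variable {R : Type*} [CommRing R] (M : Matrix (Fin 2) (Fin 2) R)

theorem sq_eq_trace_smul_sub_det_smul : M ^ 2 = M.trace • M - M.det • 1 := by
  ext i j
  fin_cases i <;> fin_cases j <;>
    simp [sq, mul_apply, trace_fin_two, det_fin_two] <;> ring

theorem trace_pow_add_two_s11 (n : ℕ) :
    trace (M ^ (n + 2)) = M.trace * trace (M ^ (n + 1)) - M.det * trace (M ^ n) := by
  rw [pow_add, sq_eq_trace_smul_sub_det_smul, mul_sub, mul_smul_comm, mul_smul_comm, mul_one,
    ← pow_succ, trace_sub, trace_smul, trace_smul, smul_eq_mul, smul_eq_mul]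

variable {M} [LinearOrder R] [IsStrictOrderedRing R]

theorem two_lt_trace_pow (hdet : M.det = 1) (htr : 2 < M.trace) {n : ℕ} (hn : n ≠ 0) :
    2 < trace (M ^ n) := by
  have hmono : ∀ m : ℕ, 2 ≤ trace (M ^ m) ∧ trace (M ^ m) < trace (M ^ (m + 1)) := by
    intro m
    induction m with
    | zero => simpa [trace_one] using htr
    | succ m ih =>
      obtain ⟨h₁, h₂⟩ := ih
      refine ⟨by linarith, ?_⟩
      rw [trace_pow_add_two_s11, hdet, one_mul]
      nlinarith [mul_pos (sub_pos.2 htr) (by linarith : 0 < trace (M ^ (m + 1)))]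
  calc (2 : R) ≤ trace (M ^ 0) := by simp
    _ < trace (M ^ n) := (strictMono_nat_of_lt_succ fun m => (hmono m).2) (Nat.pos_of_ne_zero hn)

theorem eq_one_of_isOfFinOrder_of_two_le_trace (hM : IsOfFinOrder M) (hdet : M.det = 1)
    (htr : 2 ≤ M.trace) : M = 1 := by
  obtain ⟨n, hn, hMn⟩ := isOfFinOrder_iff_pow_eq_one.1 hM
  rcases htr.eq_or_lt with htr | htr
  · refine eq_one_of_sq_sub_one_eq_zero_of_pow_eq_one ?_ hn.ne' hMn
    have hsq : M ^ 2 = (2 : R) • M - 1 := by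
      rw [sq_eq_trace_smul_sub_det_smul, ← htr, hdet, one_smul]
    calc (M - 1) ^ 2 = M ^ 2 - (2 : R) • M + 1 := by rw [two_smul]; noncomm_ring
      _ = 0 := by rw [hsq]; abel
  · have := two_lt_trace_pow hdet htr hn.ne'
    simp [hMn] at this

end Matrix

namespace GL2Z

open Matrix

def signModTwo : GL (Fin 2) ℤ →* ℤˣ :=
  Equiv.Perm.sign.comp <| (MulAction.toPermHom _ (Fin 2 → ZMod 2)).comp <|
    GeneralLinearGroup.toLin.toMonoidHom.comp (GeneralLinearGroup.map (Int.castRingHom (ZMod 2)))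

def detSignModTwo : GL (Fin 2) ℤ →* ℤˣ × ℤˣ := GeneralLinearGroup.det.prod signModTwo

def upperShear : GL (Fin 2) ℤ := ⟨!![1, 1; 0, 1], !![1, -1; 0, 1], by decide, by decide⟩

def lowerShear : GL (Fin 2) ℤ := ⟨!![1, 0; 1, 1], !![1, 0; -1, 1], by decide, by decide⟩

def reflection : GL (Fin 2) ℤ := ⟨!![1, 0; 0, -1], !![1, 0; 0, -1], by decide, by decide⟩

theorem detSignModTwo_surjective : Function.Surjective detSignModTwo := by
  rintro ⟨u, v⟩
  obtain rfl | rfl := Int.units_eq_one_or u <;> obtain rfl | rfl := Int.units_eq_one_or v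
  exacts [⟨1, map_one _⟩, ⟨upperShear, by decide⟩, ⟨reflection, by decide⟩,
    ⟨reflection * upperShear, by decide⟩]

theorem detSignModTwo_neg_one : detSignModTwo (-1) = 1 := by decide

theorem detSignModTwo_eq_one_of_cube {A : GL (Fin 2) ℤ} (hA : A ^ 3 = 1 ∨ A ^ 3 = -1) :
    detSignModTwo A = 1 := calc
  detSignModTwo A = detSignModTwo A ^ 3 := by
    rw [pow_succ, show detSignModTwo A ^ 2 = 1 from Prod.ext (Int.units_sq _) (Int.units_sq _),
      one_mul]
  _ = 1 := by
    rw [← map_pow]; rcases hA with hA | hA <;> rw [hA]; exacts [map_one _, detSignModTwo_neg_one]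

theorem not_commute_sq_upperShear_lowerShear : ¬ Commute (upperShear ^ 2) (lowerShear ^ 2) := by
  rw [Commute, SemiconjBy]; decide

theorem sq_or_cube_eq_one_or_neg_one_of_isOfFinOrder {A : GL (Fin 2) ℤ} (hA : IsOfFinOrder A) :
    (A ^ 2 = 1 ∨ A ^ 2 = -1) ∨ (A ^ 3 = 1 ∨ A ^ 3 = -1) := by
  simp only [Units.ext_iff, Units.val_pow_eq_pow_val, Units.val_neg, Units.val_one]
  set M : Matrix (Fin 2) (Fin 2) ℤ := ↑A
  have hM : IsOfFinOrder M := (Units.coeHom _).isOfFinOrder hA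
  have hdet : M.det = 1 ∨ M.det = -1 := by
    rw [← Int.isUnit_iff, ← GeneralLinearGroup.val_det_apply]
    exact Units.isUnit _
  have hCH := M.sq_eq_trace_smul_sub_det_smul
  by_cases h2 : 2 ≤ trace (M ^ 2)
  · refine Or.inl (Or.inl (eq_one_of_isOfFinOrder_of_two_le_trace hM.pow ?_ h2))
    rw [det_pow]
    rcases hdet with h | h <;> simp [h]
  have htr : trace (M ^ 2) = M.trace ^ 2 - 2 * M.det := by
    rw [hCH, trace_sub, trace_smul, trace_smul, trace_one]
    simp only [Int.zsmul_eq_mul, Fintype.card_fin, Nat.cast_ofNat]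
    ring
  obtain ⟨hd, ht⟩ : M.det = 1 ∧ (M.trace = -1 ∨ M.trace = 0 ∨ M.trace = 1) := by
    rcases hdet with hd | hd
    · refine ⟨hd, ?_⟩
      have : -2 < M.trace ∧ M.trace < 2 := ⟨by nlinarith, by nlinarith⟩
      omega
    · nlinarith [sq_nonneg M.trace]
  rw [hd, one_smul] at hCH
  rcases ht with ht | ht | ht <;> rw [ht] at hCH
  · refine Or.inr (Or.inl ?_)
    rw [pow_succ, hCH, sub_mul, smul_mul_assoc, one_mul, ← sq, hCH]
    module
  · exact Or.inl (Or.inr (by rw [hCH]; module))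
  · refine Or.inr (Or.inr ?_)
    rw [pow_succ, hCH, sub_mul, smul_mul_assoc, one_mul, ← sq, hCH]
    module

end GL2Z

open GL2Z Subgroup in
theorem GL2Z_not_generated_by_two_torsion_elements :
    ¬ ∃ A B : Matrix.GeneralLinearGroup (Fin 2) ℤ, IsOfFinOrder A ∧ IsOfFinOrder B ∧
      Subgroup.closure ({A, B} : Set (Matrix.GeneralLinearGroup (Fin 2) ℤ)) = ⊤ := by
  rintro ⟨A, B, hA, hB, hAB⟩
  have cube_case :
      ∀ {C D : GL (Fin 2) ℤ}, (C ^ 3 = 1 ∨ C ^ 3 = -1) → Subgroup.closure {C, D} ≠ ⊤ :=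
    fun hC => closure_pair_ne_top_of_map_eq_one detSignModTwo_surjective
      Int.not_isCyclic_units_prod (detSignModTwo_eq_one_of_cube hC) _
  have sq_mem_center : ∀ {C : GL (Fin 2) ℤ}, (C ^ 2 = 1 ∨ C ^ 2 = -1) → C ^ 2 ∈ center _ := by
    rintro C (h | h) <;> rw [h]
    exacts [one_mem _, neg_one_mem_center]
  rcases sq_or_cube_eq_one_or_neg_one_of_isOfFinOrder hA with hA | hA
  · rcases sq_or_cube_eq_one_or_neg_one_of_isOfFinOrder hB with hB | hB
    · exact not_commute_sq_upperShear_lowerShear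
        (commute_sq_of_closure_pair_eq_top (sq_mem_center hA) (sq_mem_center hB) hAB _ _)
    · exact cube_case hB (by rwa [Set.pair_comm])
  · exact cube_case hA hAB
end

section
/- Every finite-order element of PGL(2,ℤ) is conjugate to one of the eight elements 1, a, a², t, at, a²t, b, bt, where a, b, t are the standard generators with a³ = t² = b² = 1, tat = a², bt = tb. -/
/-!
`P` is the semidirect product `(ℤ/3 * ℤ/2) ⋊ ℤ/2` of the free product `⟨a⟩ * ⟨b⟩` by `⟨t⟩`,
with `t` acting by `a ↦ a²`, `b ↦ b`. So every element is `w t^ε` for a unique word `w` whose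
letters alternate between `{a, a²}` and `{b}`; uniqueness comes from the action of `P` on these
normal forms. If `w` is nonempty and cyclically reduced (first and last letters in different
factors), then `(w t^ε)² = w · (t^ε w t^ε)` is a cyclically reduced word of `⟨a⟩ * ⟨b⟩`, whose
powers are reduced words of growing length, so `w t^ε` has infinite order. Otherwise conjugating
by the first letter of `w` shortens it. Hence a torsion element is conjugate to some `w t^ε` with
`w` of length at most one, and these are the eight listed elements.
-/

namespace PGLpres

/-- Relations of the presentation `⟨a, b, t ∣ a³ = t² = b² = 1, at = ta², bt = tb⟩`,
where `a`, `b`, `t` are the generators indexed by `0`, `1`, `2` respectively. -/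
def rels : Set (FreeGroup (Fin 3)) :=
  { FreeGroup.of 0 ^ 3, FreeGroup.of 2 ^ 2, FreeGroup.of 1 ^ 2,
    (FreeGroup.of 0 * FreeGroup.of 2) * (FreeGroup.of 2 * FreeGroup.of 0 ^ 2)⁻¹,
    (FreeGroup.of 1 * FreeGroup.of 2) * (FreeGroup.of 2 * FreeGroup.of 1)⁻¹ }

/-- The presented group `P = ⟨a, b, t ∣ a³ = t² = b² = 1, at = ta², bt = tb⟩`,
isomorphic to `PGL(2, ℤ)`. -/
abbrev P := PresentedGroup rels

def a : P := PresentedGroup.of 0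
def b : P := PresentedGroup.of 1
def t : P := PresentedGroup.of 2

end PGLpres

theorem List.IsChain.flatten_replicate {α : Type*} {R : α → α → Prop} {l : List α}
    (h : (l ++ l).IsChain R) (n : ℕ) : (List.replicate n l).flatten.IsChain R := by
  rcases eq_or_ne l [] with rfl | hne
  · simp
  obtain ⟨hl, -, hjoin⟩ := List.isChain_append.1 h
  refine (List.isChain_flatten (by simp [hne.symm])).2 ⟨by simp [hl], ?_⟩
  exact List.isChain_replicate_of_rel n hjoin

theorem MulAction.apply_smul_eq_mul_of_closure_eq_top {G X : Type*} [Group G] [MulAction G X]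
    {S : Set G} (hS : Subgroup.closure S = ⊤) {f : X → G}
    (hf : ∀ s ∈ S, ∀ x, f (s • x) = s * f x) (g : G) (x : X) : f (g • x) = g * f x := by
  have hg : g ∈ Subgroup.closure S := hS ▸ Subgroup.mem_top g
  induction hg using Subgroup.closure_induction_left generalizing x with
  | one => simp
  | mul_left s hs g _ ih => rw [mul_smul, hf s hs, ih, mul_assoc]
  | inv_mul_cancel s hs g _ ih =>
    rw [mul_smul, mul_assoc, ← ih, eq_inv_mul_iff_mul_eq, ← hf s hs, smul_inv_smul]

namespace PGLpres

theorem a_pow_three : a ^ 3 = 1 :=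
  (map_pow (PresentedGroup.mk rels) _ 3).symm.trans (PresentedGroup.one_of_mem (by simp [rels]))

theorem b_sq : b ^ 2 = 1 :=
  (map_pow (PresentedGroup.mk rels) _ 2).symm.trans (PresentedGroup.one_of_mem (by simp [rels]))

theorem t_sq : t ^ 2 = 1 :=
  (map_pow (PresentedGroup.mk rels) _ 2).symm.trans (PresentedGroup.one_of_mem (by simp [rels]))

theorem a_mul_t : a * t = t * a ^ 2 := by
  simp only [a, t, PresentedGroup.of, ← map_pow, ← map_mul]
  exact PresentedGroup.mk_eq_mk_of_mul_inv_mem (by simp [rels])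

theorem b_mul_t : b * t = t * b := by
  simp only [b, t, PresentedGroup.of, ← map_mul]
  exact PresentedGroup.mk_eq_mk_of_mul_inv_mem (by simp [rels])

theorem a_sq_mul_a_sq : a ^ 2 * a ^ 2 = a := by
  rw [← pow_add, pow_succ, a_pow_three, one_mul]

theorem a_sq_mul_t : a ^ 2 * t = t * a := by
  rw [sq, mul_assoc, a_mul_t, ← mul_assoc, a_mul_t, mul_assoc, a_sq_mul_a_sq]

inductive Letter
  | a | a2 | b

namespace Letter

def isB : Letter → Bool
  | b => true
  | _ => false

def conjT : Letter → Letter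
  | a => a2
  | a2 => a
  | b => b

def twist (ε : Bool) (l : Letter) : Letter := bif ε then l.conjT else l

@[simp] theorem conjT_conjT (l : Letter) : l.conjT.conjT = l := by
  cases l <;> rfl

@[simp] theorem isB_twist (ε : Bool) (l : Letter) : (l.twist ε).isB = l.isB := by
  cases ε <;> cases l <;> rfl

def toP : Letter → P
  | a => PGLpres.a
  | a2 => PGLpres.a ^ 2
  | b => PGLpres.b

theorem toP_mul_toP_of_isB_eq {l m : Letter} (h : l.isB = m.isB) :
    l.toP * m.toP = 1 ∨ ∃ n : Letter, n.isB = l.isB ∧ l.toP * m.toP = n.toP := by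
  cases l <;> cases m <;> simp only [isB, reduceCtorEq] at h
  · exact .inr ⟨a2, rfl, (sq PGLpres.a).symm⟩
  · exact .inl (by rw [toP, toP, ← pow_succ', a_pow_three])
  · exact .inl (by rw [toP, toP, ← pow_succ, a_pow_three])
  · exact .inr ⟨a, rfl, a_sq_mul_a_sq⟩
  · exact .inl (by rw [toP, ← sq, b_sq])

end Letter

def tPow (ε : Bool) : P := bif ε then t else 1

def wordProd (w : List Letter) : P := (w.map Letter.toP).prod

def toP (w : List Letter) (ε : Bool) : P := wordProd w * tPow ε

theorem wordProd_append (u v : List Letter) : wordProd (u ++ v) = wordProd u * wordProd v := by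
  simp [wordProd]

theorem wordProd_singleton (l : Letter) : wordProd [l] = l.toP := by
  simp [wordProd]

theorem wordProd_pow (w : List Letter) (n : ℕ) :
    wordProd w ^ n = wordProd (List.replicate n w).flatten := by
  simp [wordProd, List.map_flatten, List.prod_flatten]

theorem toP_cons (l : Letter) (w : List Letter) (ε : Bool) :
    toP (l :: w) ε = l.toP * toP w ε := by
  simp [toP, wordProd, mul_assoc]

theorem tPow_mul_self (ε : Bool) : tPow ε * tPow ε = 1 := by
  cases ε
  · exact mul_one 1
  · exact (sq t).symm.trans t_sq

theorem t_mul_tPow (ε : Bool) : t * tPow ε = tPow (!ε) := by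
  cases ε
  · exact mul_one t
  · exact (sq t).symm.trans t_sq

theorem tPow_mul_toP (ε : Bool) (l : Letter) : tPow ε * l.toP = (l.twist ε).toP * tPow ε := by
  cases ε <;> cases l <;>
    simp [tPow, Letter.twist, Letter.conjT, Letter.toP, a_mul_t, a_sq_mul_t, b_mul_t]

theorem tPow_mul_wordProd (ε : Bool) (w : List Letter) :
    tPow ε * wordProd w = wordProd (w.map (Letter.twist ε)) * tPow ε := by
  induction w with
  | nil => simp [wordProd]
  | cons l w ih =>
    simp only [wordProd, List.map_cons, List.prod_cons] at ih ⊢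
    rw [← mul_assoc, tPow_mul_toP, mul_assoc, ih, mul_assoc]

theorem t_mul_toP (w : List Letter) (ε : Bool) :
    t * toP w ε = toP (w.map Letter.conjT) (!ε) := by
  rw [toP, toP, ← t_mul_tPow, ← mul_assoc, ← mul_assoc]
  exact congrArg (· * tPow ε) (tPow_mul_wordProd true w)

theorem toP_sq (w : List Letter) (ε : Bool) :
    toP w ε ^ 2 = wordProd (w ++ w.map (Letter.twist ε)) := by
  rw [sq, toP, mul_assoc, ← mul_assoc (tPow ε), tPow_mul_wordProd, mul_assoc, tPow_mul_self,
    mul_one, wordProd_append]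

def consA : List Letter → List Letter
  | .a :: w => .a2 :: w
  | .a2 :: w => w
  | w => .a :: w

def consB : List Letter → List Letter
  | .b :: w => w
  | w => .b :: w

theorem toP_consA (w : List Letter) (ε : Bool) : toP (consA w) ε = a * toP w ε := by
  rcases w with _ | ⟨_ | _ | _, w⟩ <;>
    simp [toP, consA, wordProd, Letter.toP, ← mul_assoc, ← sq, ← pow_succ', a_pow_three]

theorem toP_consB (w : List Letter) (ε : Bool) : toP (consB w) ε = b * toP w ε := by
  rcases w with _ | ⟨_ | _ | _, w⟩ <;>
    simp [toP, consB, wordProd, Letter.toP, ← mul_assoc, ← sq, b_sq]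

def Alternating (w : List Letter) : Prop := (w.map Letter.isB).IsChain (· ≠ ·)

namespace Alternating

variable {w : List Letter}

theorem left_of_append {v : List Letter} (h : Alternating (w ++ v)) : Alternating w := by
  unfold Alternating at *
  rw [List.map_append] at h
  exact h.left_of_append

theorem map_twist (h : Alternating w) (ε : Bool) : Alternating (w.map (Letter.twist ε)) := by
  simpa [Alternating, Function.comp_def] using h

theorem consA (h : Alternating w) : Alternating (PGLpres.consA w) := by
  rcases w with _ | ⟨_ | _ | _, _ | ⟨_ | _ | _, w⟩⟩ <;>
    simp_all [Alternating, PGLpres.consA, Letter.isB]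

theorem consB (h : Alternating w) : Alternating (PGLpres.consB w) := by
  rcases w with _ | ⟨_ | _ | _, _ | ⟨_ | _ | _, w⟩⟩ <;>
    simp_all [Alternating, PGLpres.consB, Letter.isB]

end Alternating

theorem consA_consA_consA {w : List Letter} (h : Alternating w) :
    consA (consA (consA w)) = w := by
  rcases w with _ | ⟨_ | _ | _, _ | ⟨_ | _ | _, w⟩⟩ <;>
    simp_all [Alternating, consA, Letter.isB]

theorem consB_consB {w : List Letter} (h : Alternating w) : consB (consB w) = w := by
  rcases w with _ | ⟨_ | _ | _, _ | ⟨_ | _ | _, w⟩⟩ <;>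
    simp_all [Alternating, consB, Letter.isB]

theorem consA_map_conjT {w : List Letter} (h : Alternating w) :
    consA (w.map Letter.conjT) = (consA (consA w)).map Letter.conjT := by
  rcases w with _ | ⟨_ | _ | _, _ | ⟨_ | _ | _, w⟩⟩ <;>
    simp_all [Alternating, consA, Letter.isB, Letter.conjT]

theorem consB_map_conjT (w : List Letter) :
    consB (w.map Letter.conjT) = (consB w).map Letter.conjT := by
  rcases w with _ | ⟨_ | _ | _, w⟩ <;> simp [consB, Letter.conjT]

@[ext]
structure NormalForm where
  word : List Letter
  flip : Bool
  alternating : Alternating word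

namespace NormalForm

def mulA (x : NormalForm) : NormalForm := ⟨consA x.word, x.flip, x.alternating.consA⟩

def mulB (x : NormalForm) : NormalForm := ⟨consB x.word, x.flip, x.alternating.consB⟩

def mulT (x : NormalForm) : NormalForm :=
  ⟨x.word.map Letter.conjT, !x.flip, x.alternating.map_twist true⟩

theorem mulA_mulA_mulA (x : NormalForm) : x.mulA.mulA.mulA = x := by
  ext : 1 <;> simp [mulA, consA_consA_consA x.alternating]

theorem mulB_mulB (x : NormalForm) : x.mulB.mulB = x := by
  ext : 1 <;> simp [mulB, consB_consB x.alternating]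

theorem mulT_mulT (x : NormalForm) : x.mulT.mulT = x := by
  ext : 1 <;> simp [mulT, Function.comp_def]

theorem mulT_mulA (x : NormalForm) : x.mulT.mulA = x.mulA.mulA.mulT := by
  ext : 1 <;> simp [mulA, mulT, consA_map_conjT x.alternating]

theorem mulT_mulB (x : NormalForm) : x.mulT.mulB = x.mulB.mulT := by
  ext : 1 <;> simp [mulB, mulT, consB_map_conjT]

def permA : Equiv.Perm NormalForm :=
  ⟨mulA, fun x => x.mulA.mulA, mulA_mulA_mulA, mulA_mulA_mulA⟩

def permB : Equiv.Perm NormalForm := ⟨mulB, mulB, mulB_mulB, mulB_mulB⟩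

def permT : Equiv.Perm NormalForm := ⟨mulT, mulT, mulT_mulT, mulT_mulT⟩

theorem lift_rels_eq_one : ∀ r ∈ rels, FreeGroup.lift ![permA, permB, permT] r = 1 := by
  simp only [rels, Set.mem_insert_iff, Set.mem_singleton_iff]
  rintro r (rfl | rfl | rfl | rfl | rfl) <;> ext x : 1 <;>
    simp [pow_succ, permA, permB, permT, mulA_mulA_mulA, mulB_mulB, mulT_mulT, mulT_mulA,
      mulT_mulB]

def action : P →* Equiv.Perm NormalForm := PresentedGroup.toGroup lift_rels_eq_one

instance : MulAction P NormalForm := MulAction.compHom _ action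

theorem a_smul (x : NormalForm) : a • x = x.mulA :=
  congrArg (· x) (PresentedGroup.toGroup.of lift_rels_eq_one (x := 0))

theorem b_smul (x : NormalForm) : b • x = x.mulB :=
  congrArg (· x) (PresentedGroup.toGroup.of lift_rels_eq_one (x := 1))

theorem t_smul (x : NormalForm) : t • x = x.mulT :=
  congrArg (· x) (PresentedGroup.toGroup.of lift_rels_eq_one (x := 2))

theorem toP_smul (g : P) (x : NormalForm) :
    toP (g • x).word (g • x).flip = g * toP x.word x.flip := by
  refine MulAction.apply_smul_eq_mul_of_closure_eq_top (PresentedGroup.closure_range_of rels)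
    (f := fun x : NormalForm => toP x.word x.flip) ?_ g x
  rintro _ ⟨i, rfl⟩ x
  fin_cases i
  · change toP (a • x).word (a • x).flip = a * _
    rw [a_smul]
    exact toP_consA x.word x.flip
  · change toP (b • x).word (b • x).flip = b * _
    rw [b_smul]
    exact toP_consB x.word x.flip
  · change toP (t • x).word (t • x).flip = t * _
    rw [t_smul]
    exact (t_mul_toP x.word x.flip).symm

def one : NormalForm := ⟨[], false, List.isChain_nil⟩

theorem exists_toP_eq (g : P) : ∃ x : NormalForm, toP x.word x.flip = g :=
  ⟨g • one, by rw [toP_smul]; exact mul_one g⟩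

theorem letter_toP_smul_mk {l : Letter} {w : List Letter} {ε : Bool} (hw : Alternating w)
    (h : Alternating (l :: w)) : l.toP • (⟨w, ε, hw⟩ : NormalForm) = ⟨l :: w, ε, h⟩ := by
  cases l <;> simp only [Letter.toP, sq, mul_smul, a_smul, b_smul] <;> ext : 1 <;>
    rcases w with _ | ⟨_ | _ | _, w⟩ <;> simp [mulA, mulB, consA, consB] <;>
    simp [Alternating, Letter.isB] at h

theorem toP_smul_one (x : NormalForm) : toP x.word x.flip • one = x := by
  obtain ⟨w, ε, hw⟩ := x
  induction w with
  | nil =>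
    cases ε
    · exact (congrArg (· • one) (mul_one 1)).trans (one_smul P one)
    · exact (congrArg (· • one) (one_mul t)).trans (t_smul one)
  | cons l w ih =>
    rw [toP_cons, mul_smul, ih hw.tail]
    exact letter_toP_smul_mk hw.tail hw

end NormalForm

theorem eq_nil_of_wordProd_eq_one {w : List Letter} (hw : Alternating w) (h : wordProd w = 1) :
    w = [] := by
  have := NormalForm.toP_smul_one ⟨w, false, hw⟩
  rw [show toP w false = 1 from (mul_one _).trans h, one_smul] at this
  exact congrArg NormalForm.word this.symm

-- `w` alternates and its last and first letters lie in different factors.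
def CyclicallyReduced (w : List Letter) : Prop := Alternating (w ++ w)

namespace CyclicallyReduced

variable {w : List Letter}

theorem append_map_twist (h : CyclicallyReduced w) (ε : Bool) :
    CyclicallyReduced (w ++ w.map (Letter.twist ε)) := by
  unfold CyclicallyReduced Alternating at *
  rw [List.map_append] at h
  simpa [List.replicate_succ, Function.comp_def] using h.flatten_replicate 4

theorem alternating_flatten_replicate (h : CyclicallyReduced w) (n : ℕ) :
    Alternating (List.replicate n w).flatten := by
  unfold CyclicallyReduced Alternating at *
  rw [List.map_flatten, List.map_replicate]
  exact (List.map_append .. ▸ h).flatten_replicate n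

end CyclicallyReduced

theorem not_isOfFinOrder_toP {w : List Letter} (hc : CyclicallyReduced w) (hne : w ≠ [])
    (ε : Bool) : ¬ IsOfFinOrder (toP w ε) := by
  intro hfin
  obtain ⟨n, hn, hpow⟩ := (hfin.pow (n := 2)).exists_pow_eq_one
  rw [toP_sq, wordProd_pow] at hpow
  have := eq_nil_of_wordProd_eq_one
    ((hc.append_map_twist ε).alternating_flatten_replicate n) hpow
  simp_all

theorem isConj_toP_cons (l : Letter) (w : List Letter) (ε : Bool) :
    IsConj (toP (w ++ [l.twist ε]) ε) (toP (l :: w) ε) := by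
  refine isConj_iff.2 ⟨l.toP, ?_⟩
  rw [toP, wordProd_append, wordProd_singleton, mul_assoc (wordProd w), ← tPow_mul_toP,
    toP_cons, toP]
  group

theorem exists_isConj_shorter {w : List Letter} (hw : Alternating w) (hlen : 2 ≤ w.length)
    (hc : ¬ CyclicallyReduced w) (ε : Bool) :
    ∃ w', Alternating w' ∧ w'.length < w.length ∧ IsConj (toP w' ε) (toP w ε) := by
  obtain ⟨l, u, m, rfl⟩ : ∃ l u m, w = l :: (u ++ [m]) := by
    rcases w with _ | ⟨l, v⟩
    · simp at hlen
    obtain ⟨u, m, rfl⟩ := (List.eq_nil_or_concat' v).resolve_left (by rintro rfl; simp at hlen)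
    exact ⟨l, u, m, rfl⟩
  have hum : Alternating (u ++ [m]) := hw.tail
  have hlm : m.isB = (l.twist ε).isB := by
    rw [Letter.isB_twist]
    by_contra hne
    apply hc
    unfold CyclicallyReduced Alternating
    rw [List.map_append, List.isChain_append]
    exact ⟨hw, hw, by simp [List.getLast?_cons, hne]⟩
  have hconj := isConj_toP_cons l (u ++ [m]) ε
  rw [show toP (u ++ [m] ++ [l.twist ε]) ε = wordProd u * (m.toP * (l.twist ε).toP) * tPow ε by
    simp [toP, wordProd, mul_assoc]] at hconj
  rcases Letter.toP_mul_toP_of_isB_eq hlm with hcancel | ⟨n, hn, hmerge⟩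
  · refine ⟨u, hum.left_of_append, by simp, ?_⟩
    rwa [hcancel, mul_one] at hconj
  · refine ⟨u ++ [n], by simpa [Alternating, hn] using hum, by simp, ?_⟩
    rwa [toP, wordProd_append, wordProd_singleton, ← hmerge]

theorem exists_isConj_short_or_cyclicallyReduced {w : List Letter} (hw : Alternating w)
    (ε : Bool) : ∃ w', (w'.length ≤ 1 ∨ w' ≠ [] ∧ CyclicallyReduced w') ∧
      IsConj (toP w' ε) (toP w ε) := by
  induction hn : w.length using Nat.strong_induction_on generalizing w with
  | _ n ih =>
  by_cases hshort : w.length ≤ 1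
  · exact ⟨w, .inl hshort, .refl _⟩
  by_cases hc : CyclicallyReduced w
  · exact ⟨w, .inr ⟨by rintro rfl; simp at hshort, hc⟩, .refl _⟩
  obtain ⟨w', hw', hlt, hconj⟩ := exists_isConj_shorter hw (by omega) hc ε
  obtain ⟨w'', hw'', hconj'⟩ := ih _ (hn ▸ hlt) hw' rfl
  exact ⟨w'', hw'', hconj'.trans hconj⟩

theorem toP_mem_of_length_le_one {w : List Letter} (h : w.length ≤ 1) (ε : Bool) :
    toP w ε ∈ ({1, a, a ^ 2, t, a * t, a ^ 2 * t, b, b * t} : Set P) := by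
  rcases w with _ | ⟨l, _ | _⟩
  · cases ε <;> simp [toP, wordProd, tPow]
  · cases ε <;> cases l <;> simp [toP, wordProd, tPow, Letter.toP]
  · simp at h

/-- Every finite-order element of `PGL(2,ℤ)` is conjugate to one of
`1, a, a², t, at, a²t, b, bt`. -/
theorem torsion_conjugacy_classes (g : P) (hg : IsOfFinOrder g) :
    ∃ x ∈ ({1, a, a ^ 2, t, a * t, a ^ 2 * t, b, b * t} : Set P), IsConj x g := by
  obtain ⟨x, rfl⟩ := NormalForm.exists_toP_eq g
  obtain ⟨w, hshort | ⟨hne, hc⟩, hconj⟩ :=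
    exists_isConj_short_or_cyclicallyReduced x.alternating x.flip
  · exact ⟨_, toP_mem_of_length_le_one hshort x.flip, hconj⟩
  · exact absurd (hconj.symm.isOfFinOrder hg) (not_isOfFinOrder_toP hc hne x.flip)

end PGLpres
end
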